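/- Let D₁ ⊆ ℂ be a domain biholomorphic to ℂ∗ := ℂ \ {0}. Then for any domain D₂ ⊆ ℂ, the Hahn and Kobayashi–Royden pseudometrics of the product coincide: h_{D₁×D₂} ≡ κ_{D₁×D₂}. -/

import Mathlib

open Set Metric Complex

noncomputable section

/-- The open unit disc `E` in `ℂ`. -/
def unitDisc : Set ℂ := Metric.ball (0 : ℂ) 1

/-- The Kobayashi–Royden pseudometric of a set `D` in a complex normed space:
`κ_D(z;X) = inf {|α| : ∃ holomorphic f : E → D, f(0) = z, α·f'(0) = X}`. -/
def kobayashi {V : Type*} [NormedAddCommGroup V] [NormedSpace ℂ V]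
    (D : Set V) (z X : V) : ℝ :=
  sInf {r : ℝ | ∃ (α : ℂ) (f : ℂ → V), ‖α‖ = r ∧
    DifferentiableOn ℂ f unitDisc ∧ MapsTo f unitDisc D ∧
    f 0 = z ∧ α • deriv f 0 = X}

/-- The Hahn pseudometric of a set `D` in a complex normed space:
`h_D(z;X) = inf {|α| : ∃ injective holomorphic f : E → D, f(0) = z, α·f'(0) = X}`. -/
def hahn {V : Type*} [NormedAddCommGroup V] [NormedSpace ℂ V]
    (D : Set V) (z X : V) : ℝ :=
  sInf {r : ℝ | ∃ (α : ℂ) (f : ℂ → V), ‖α‖ = r ∧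
    DifferentiableOn ℂ f unitDisc ∧ MapsTo f unitDisc D ∧ InjOn f unitDisc ∧
    f 0 = z ∧ α • deriv f 0 = X}

/-- `D₁` is biholomorphic to `D₂`: there is a holomorphic bijection `f : D₁ → D₂`
with holomorphic inverse. -/
def Biholomorphic (D₁ D₂ : Set ℂ) : Prop :=
  ∃ f g : ℂ → ℂ, DifferentiableOn ℂ f D₁ ∧ DifferentiableOn ℂ g D₂ ∧
    MapsTo f D₁ D₂ ∧ MapsTo g D₂ D₁ ∧
    (∀ z ∈ D₁, g (f z) = z) ∧ (∀ w ∈ D₂, f (g w) = w)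

/-!
If `φ : ℂ∗ → D₁` is the biholomorphism, `Φ = φ ∘ exp : ℂ → D₁` is onto, has nowhere vanishing
derivative, and `Φ a = Φ a'` forces `exp a = exp a'`. Hence a disc `t ↦ (Φ (L + u t), q t)`, with
`u` any holomorphic function, is injective as soon as `exp (u t) = exp (u t')` and `q t = q t'`
imply `t = t'`.

Every competitor `f` for `κ` at `z` can therefore be replaced by an injective one with the same
derivative `v` at `0`, so `h` and `κ` are infima of the same set. Writing `v₁ = Φ'(L) b`, take
* if `v₂ ≠ 0`: `q = f₂` and `u = t + (b - 1) / v₂ · (f₂ t - z₂)`; on a fibre of `q`, `u - t` is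
  constant, and `exp` is injective on the unit disc;
* if `v₂ = 0 ≠ b`: `u = b t` and `q = z₂ + η (e^{bt} - 1 - bt)`;
* if `v₂ = 0 = b`: `u = t²` and `q = z₂ + η t³`,
where `η ≠ 0` is small enough for `q` to stay in `D₂`.
-/

lemma isOpen_unitDisc : IsOpen unitDisc := isOpen_ball

lemma zero_mem_unitDisc : (0 : ℂ) ∈ unitDisc := mem_ball_self one_pos

lemma mem_unitDisc {t : ℂ} : t ∈ unitDisc ↔ ‖t‖ < 1 := mem_ball_zero_iff

lemma pow_mem_unitDisc {t : ℂ} (ht : t ∈ unitDisc) {n : ℕ} (hn : n ≠ 0) : t ^ n ∈ unitDisc := by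
  rw [mem_unitDisc, norm_pow] at *
  exact pow_lt_one₀ (norm_nonneg t) ht hn

lemma injOn_exp_unitDisc : InjOn exp unitDisc := by
  have him {t : ℂ} (ht : t ∈ unitDisc) : |t.im| < Real.pi :=
    ((abs_im_le_norm t).trans_lt (mem_unitDisc.mp ht)).trans (by linarith [Real.pi_gt_three])
  intro a ha a' ha' h
  exact exp_inj_of_neg_pi_lt_of_le_pi (abs_lt.mp (him ha)).1 (abs_lt.mp (him ha)).2.le
    (abs_lt.mp (him ha')).1 (abs_lt.mp (him ha')).2.le h

theorem hahn_eq_kobayashi_of_forall_exists_injOn {V : Type*} [NormedAddCommGroup V]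
    [NormedSpace ℂ V] {D : Set V} {z : V}
    (h : ∀ f : ℂ → V, DifferentiableOn ℂ f unitDisc → MapsTo f unitDisc D → f 0 = z →
      ∃ g : ℂ → V, DifferentiableOn ℂ g unitDisc ∧ MapsTo g unitDisc D ∧ InjOn g unitDisc ∧
        g 0 = z ∧ deriv g 0 = deriv f 0)
    (X : V) : hahn D z X = kobayashi D z X := by
  unfold hahn kobayashi
  congr 1
  ext r
  constructor
  · rintro ⟨α, f, hr, hf, hfD, -, hf0, hX⟩
    exact ⟨α, f, hr, hf, hfD, hf0, hX⟩
  · rintro ⟨α, f, hr, hf, hfD, hf0, hX⟩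
    obtain ⟨g, hg, hgD, hginj, hg0, hg'⟩ := h f hf hfD hf0
    exact ⟨α, g, hr, hg, hgD, hginj, hg0, hg' ▸ hX⟩

theorem Biholomorphic.exists_exp_cover {D : Set ℂ} (hD : IsOpen D)
    (h : Biholomorphic D {(0 : ℂ)}ᶜ) :
    ∃ Φ : ℂ → ℂ, Differentiable ℂ Φ ∧ (∀ a, Φ a ∈ D) ∧ (∀ z ∈ D, ∃ L, Φ L = z) ∧
      (∀ a a', Φ a = Φ a' → exp a = exp a') ∧ ∀ L, deriv Φ L ≠ 0 := by
  obtain ⟨ψ, φ, hψ, hφ, hψD, hφD, hφψ, hψφ⟩ := h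
  have hexp_mem (a : ℂ) : exp a ∈ ({0}ᶜ : Set ℂ) := exp_ne_zero a
  have hψΦ (a : ℂ) : ψ (φ (exp a)) = exp a := hψφ _ (hexp_mem a)
  have hΦ : Differentiable ℂ (fun a => φ (exp a)) := fun a =>
    (hφ.differentiableAt (isOpen_compl_singleton.mem_nhds (hexp_mem a))).comp a
      differentiableAt_exp
  refine ⟨fun a => φ (exp a), hΦ, fun a => hφD (hexp_mem a), fun z hz => ?_,
    fun a a' h => by rw [← hψΦ a, ← hψΦ a', show φ (exp a) = φ (exp a') from h],
    fun L hL => ?_⟩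
  · refine ⟨log (ψ z), ?_⟩
    simp only [exp_log (hψD hz), hφψ z hz]
  · have hψ' : DifferentiableAt ℂ ψ (φ (exp L)) :=
      hψ.differentiableAt (hD.mem_nhds (hφD (hexp_mem L)))
    have hchain := hψ'.hasDerivAt.comp L (hΦ L).hasDerivAt
    rw [hL, mul_zero, show ψ ∘ (fun a => φ (exp a)) = exp from funext hψΦ] at hchain
    exact exp_ne_zero L ((hasDerivAt_exp L).unique hchain)

structure IsInjectiveExpLift (D : Set ℂ) (w b c : ℂ) (u q : ℂ → ℂ) : Prop where
  differentiableOn_lift : DifferentiableOn ℂ u unitDisc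
  differentiableOn : DifferentiableOn ℂ q unitDisc
  mapsTo : MapsTo q unitDisc D
  lift_zero : u 0 = 0
  apply_zero : q 0 = w
  hasDerivAt_lift : HasDerivAt u b 0
  hasDerivAt : HasDerivAt q c 0
  injOn : ∀ a ∈ unitDisc, ∀ a' ∈ unitDisc, exp (u a) = exp (u a') → q a = q a' → a = a'

section InjectiveExpLift

variable {D : Set ℂ} {w b c : ℂ} {q : ℂ → ℂ}

theorem isInjectiveExpLift_of_hasDerivAt_ne_zero (hq : DifferentiableOn ℂ q unitDisc)
    (hqD : MapsTo q unitDisc D) (hc : HasDerivAt q c 0) (hc₀ : c ≠ 0) (b : ℂ) :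
    IsInjectiveExpLift D (q 0) b c (fun t => t + (b - 1) / c * (q t - q 0)) q where
  differentiableOn_lift := differentiableOn_id.add ((hq.sub_const _).const_mul _)
  differentiableOn := hq
  mapsTo := hqD
  lift_zero := by simp
  apply_zero := rfl
  hasDerivAt_lift := by
    have h := (hasDerivAt_id' (0 : ℂ)).add ((hc.sub_const (q 0)).const_mul ((b - 1) / c))
    rwa [div_mul_cancel₀ _ hc₀, add_sub_cancel] at h
  hasDerivAt := hc
  injOn a ha a' ha' hexp hqa := by
    rw [hqa, exp_add, exp_add] at hexp
    exact injOn_exp_unitDisc ha ha' (mul_right_cancel₀ (exp_ne_zero _) hexp)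

theorem isInjectiveExpLift_exp_sub_one_sub (hb : b ≠ 0) {η : ℂ} (hη : η ≠ 0)
    (hD : MapsTo (fun t => w + η * (exp (b * t) - 1 - b * t)) unitDisc D) :
    IsInjectiveExpLift D w b 0 (fun t => b * t) (fun t => w + η * (exp (b * t) - 1 - b * t)) where
  differentiableOn_lift := (differentiable_id.const_mul b).differentiableOn
  differentiableOn := by fun_prop
  mapsTo := hD
  lift_zero := mul_zero b
  apply_zero := by simp
  hasDerivAt_lift := by simpa using (hasDerivAt_id (0 : ℂ)).const_mul b
  hasDerivAt := by
    have hbt : HasDerivAt (fun t : ℂ => b * t) b 0 := by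
      simpa using (hasDerivAt_id (0 : ℂ)).const_mul b
    simpa using (((hbt.cexp.sub_const 1).sub hbt).const_mul η).const_add w
  injOn a _ a' _ hexp hq := by
    have hq' := mul_left_cancel₀ hη (add_left_cancel hq)
    rw [hexp] at hq'
    exact mul_left_cancel₀ hb (sub_right_injective hq')

theorem isInjectiveExpLift_sq_cube {η : ℂ} (hη : η ≠ 0)
    (hD : MapsTo (fun t => w + η * t ^ 3) unitDisc D) :
    IsInjectiveExpLift D w 0 0 (fun t => t ^ 2) (fun t => w + η * t ^ 3) where
  differentiableOn_lift := (differentiable_pow 2).differentiableOn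
  differentiableOn := by fun_prop
  mapsTo := hD
  lift_zero := by simp
  apply_zero := by simp
  hasDerivAt_lift := by simpa using hasDerivAt_pow 2 (0 : ℂ)
  hasDerivAt := by simpa using ((hasDerivAt_pow 3 (0 : ℂ)).const_mul η).const_add w
  injOn a ha a' ha' hexp hq := by
    have hsq : a ^ 2 = a' ^ 2 :=
      injOn_exp_unitDisc (pow_mem_unitDisc ha two_ne_zero) (pow_mem_unitDisc ha' two_ne_zero) hexp
    have hcube : a ^ 3 = a' ^ 3 := mul_left_cancel₀ hη (add_left_cancel hq)
    rcases eq_or_ne a 0 with rfl | ha₀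
    · exact (pow_eq_zero_iff two_ne_zero).mp (by simpa using hsq.symm) |>.symm
    · refine mul_left_cancel₀ (pow_ne_zero 2 ha₀) ?_
      calc a ^ 2 * a = a' ^ 2 * a' := by rw [← pow_succ, ← pow_succ, hcube]
        _ = a ^ 2 * a' := by rw [hsq]

lemma exists_ne_zero_mapsTo_add_mul (hD : IsOpen D) (hw : w ∈ D) {h : ℂ → ℂ}
    (hh : Continuous h) : ∃ η : ℂ, η ≠ 0 ∧ MapsTo (fun t => w + η * h t) unitDisc D := by
  obtain ⟨r, hr, hball⟩ := Metric.isOpen_iff.mp hD w hw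
  obtain ⟨M, hM⟩ := (isCompact_closedBall (0 : ℂ) 1).exists_bound_of_continuousOn hh.continuousOn
  have hM₀ : 0 ≤ M := (norm_nonneg _).trans (hM 0 (mem_closedBall_self zero_le_one))
  refine ⟨(r / (M + 1) : ℝ), by exact_mod_cast (by positivity : r / (M + 1) ≠ 0), fun t ht => ?_⟩
  apply hball
  rw [mem_ball, dist_eq, add_sub_cancel_left, norm_mul, norm_real,
    Real.norm_of_nonneg (by positivity)]
  calc r / (M + 1) * ‖h t‖ ≤ r / (M + 1) * M := by
        gcongr
        exact hM t (ball_subset_closedBall ht)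
    _ < r := by
        rw [div_mul_eq_mul_div, div_lt_iff₀ (by positivity)]
        nlinarith

theorem exists_isInjectiveExpLift (hD : IsOpen D) (hq : DifferentiableOn ℂ q unitDisc)
    (hqD : MapsTo q unitDisc D) (hc : HasDerivAt q c 0) (b : ℂ) :
    ∃ u q' : ℂ → ℂ, IsInjectiveExpLift D (q 0) b c u q' := by
  have hq₀ : q 0 ∈ D := hqD zero_mem_unitDisc
  rcases ne_or_eq c 0 with hc₀ | rfl
  · exact ⟨_, _, isInjectiveExpLift_of_hasDerivAt_ne_zero hq hqD hc hc₀ b⟩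
  rcases ne_or_eq b 0 with hb | rfl
  · obtain ⟨η, hη, hηD⟩ := exists_ne_zero_mapsTo_add_mul hD hq₀
      (h := fun t => exp (b * t) - 1 - b * t) (by fun_prop)
    exact ⟨_, _, isInjectiveExpLift_exp_sub_one_sub hb hη hηD⟩
  · obtain ⟨η, hη, hηD⟩ := exists_ne_zero_mapsTo_add_mul hD hq₀ (h := fun t => t ^ 3) (by fun_prop)
    exact ⟨_, _, isInjectiveExpLift_sq_cube hη hηD⟩

end InjectiveExpLift

theorem exists_injOn_deriv_eq_of_exp_cover {D₁ D₂ : Set ℂ} (hD₂ : IsOpen D₂) {Φ : ℂ → ℂ}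
    (hΦ : Differentiable ℂ Φ) (hΦD : ∀ a, Φ a ∈ D₁) (hΦsurj : ∀ z ∈ D₁, ∃ L, Φ L = z)
    (hΦexp : ∀ a a', Φ a = Φ a' → exp a = exp a') (hΦ' : ∀ L, deriv Φ L ≠ 0)
    {f : ℂ → ℂ × ℂ} (hf : DifferentiableOn ℂ f unitDisc) (hfD : MapsTo f unitDisc (D₁ ×ˢ D₂)) :
    ∃ g : ℂ → ℂ × ℂ, DifferentiableOn ℂ g unitDisc ∧ MapsTo g unitDisc (D₁ ×ˢ D₂) ∧
      InjOn g unitDisc ∧ g 0 = f 0 ∧ deriv g 0 = deriv f 0 := by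
  obtain ⟨L, hL⟩ := hΦsurj _ (hfD zero_mem_unitDisc).1
  have hf' : HasDerivAt f (deriv f 0) 0 :=
    (hf.differentiableAt (isOpen_unitDisc.mem_nhds zero_mem_unitDisc)).hasDerivAt
  obtain ⟨u, q, huq⟩ := exists_isInjectiveExpLift hD₂ hf.snd (fun t ht => (hfD ht).2) hf'.snd
    ((deriv f 0).1 / deriv Φ L)
  have hΦu : HasDerivAt (fun t => Φ (L + u t)) (deriv Φ L * ((deriv f 0).1 / deriv Φ L)) 0 := by
    have h := (hΦ (L + u 0)).hasDerivAt.comp 0 (huq.hasDerivAt_lift.const_add L)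
    rwa [huq.lift_zero, add_zero] at h
  refine ⟨fun t => (Φ (L + u t), q t), ?_, fun t ht => ⟨hΦD _, huq.mapsTo ht⟩, ?_, ?_, ?_⟩
  · exact (hΦ.comp_differentiableOn (huq.differentiableOn_lift.const_add L)).prodMk
      huq.differentiableOn
  · intro a ha a' ha' h
    have hexp := hΦexp _ _ (congrArg Prod.fst h)
    rw [exp_add, exp_add] at hexp
    exact huq.injOn a ha a' ha' (mul_left_cancel₀ (exp_ne_zero L) hexp) (congrArg Prod.snd h)
  · simp only [huq.lift_zero, huq.apply_zero, add_zero, hL]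
  · rw [(hΦu.prodMk huq.hasDerivAt).deriv, mul_div_cancel₀ _ (hΦ' L)]

/-- If `D₁ ⊆ ℂ` is a domain biholomorphic to `ℂ∗ = ℂ \\ {0}`, then for every
domain `D₂ ⊆ ℂ`, `h_{D₁×D₂} ≡ κ_{D₁×D₂}`. -/
theorem stmt5 (D₁ : Set ℂ) (hD₁ : IsOpen D₁ ∧ IsConnected D₁)
    (hbh : Biholomorphic D₁ {(0 : ℂ)}ᶜ) :
    ∀ D₂ : Set ℂ, IsOpen D₂ ∧ IsConnected D₂ →
      ∀ z ∈ D₁ ×ˢ D₂, ∀ X : ℂ × ℂ,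
        hahn (D₁ ×ˢ D₂) z X = kobayashi (D₁ ×ˢ D₂) z X := by
  intro D₂ hD₂ z _ X
  obtain ⟨Φ, hΦ, hΦD, hΦsurj, hΦexp, hΦ'⟩ := hbh.exists_exp_cover hD₁.1
  refine hahn_eq_kobayashi_of_forall_exists_injOn (fun f hf hfD hf₀ => ?_) X
  subst hf₀
  exact exists_injOn_deriv_eq_of_exp_cover hD₂.1 hΦ hΦD hΦsurj hΦexp hΦ' hf hfD
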